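/- arXiv:2409.09962 — 8 statements merged into one kernel-verified Lean document; each statement's English description precedes it below -/
import Mathlib

section
/- Let Z = (Z₁, Z₂) be a standard bivariate normal vector, let x, y ∈ (0,1) with x² + y² = 1, and let α ∈ [0,1] with z the (1 − α/2)-quantile of the standard normal distribution. Then P(−z ≤ x·|Z₁| − y·Z₂ ≤ z) = 1 − α. -/
/-!
Conditionally on `Z₁ = a`, the event `|x|a| - y Z₂| ≤ z` has the same probability as
`|x a - y Z₂| ≤ z`, because `Z₂` is symmetric and `x|a| = ±x a`. So the absolute value can be
dropped, and `x Z₁ - y Z₂` is again standard normal since `x² + y² = 1`. Its probability of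
lying in `[-z, z]` is `2Φ(z) - 1 = 1 - α`; here `z ≥ 0` because `Φ(z) ≥ 1/2` and `Φ` is
strictly increasing.
-/

open MeasureTheory ProbabilityTheory

/-- Standard normal CDF. -/
noncomputable def stdNormalCDF (t : ℝ) : ℝ :=
  ((gaussianReal 0 1) (Set.Iic t)).toReal

open Set
open scoped NNReal

lemma gaussianReal_prod_map_linear (m₁ m₂ a b : ℝ) (v₁ v₂ : ℝ≥0) :
    ((gaussianReal m₁ v₁).prod (gaussianReal m₂ v₂)).map (fun p ↦ a * p.1 + b * p.2)
      = gaussianReal (a * m₁ + b * m₂)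
          (.mk (a ^ 2) (sq_nonneg _) * v₁ + .mk (b ^ 2) (sq_nonneg _) * v₂) := by
  rw [← gaussianReal_conv_gaussianReal, ← gaussianReal_map_const_mul,
    ← gaussianReal_map_const_mul, Measure.conv, Measure.map_prod_map _ _ (by fun_prop) (by fun_prop),
    Measure.map_map (by fun_prop) (by fun_prop)]
  rfl

lemma measure_abs_neg_sub_mul_le {ν : Measure ℝ} (hν : ν.map (fun t ↦ -t) = ν) (c y z : ℝ) :
    ν {t | |-c - y * t| ≤ z} = ν {t | |c - y * t| ≤ z} := by
  conv_lhs => rw [← hν]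
  rw [Measure.map_apply measurable_neg (measurableSet_le (by fun_prop) measurable_const)]
  congr 1
  ext t
  simp only [mem_preimage, mem_ofPred_eq, ← abs_neg (c - y * t)]
  ring_nf

lemma measure_prod_abs_fst {μ ν : Measure ℝ} [SFinite ν] (hν : ν.map (fun t ↦ -t) = ν)
    (x y z : ℝ) :
    μ.prod ν {p | |x * |p.1| - y * p.2| ≤ z} = μ.prod ν {p | |x * p.1 - y * p.2| ≤ z} := by
  rw [Measure.prod_apply (measurableSet_le (by fun_prop) measurable_const),
    Measure.prod_apply (measurableSet_le (by fun_prop) measurable_const)]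
  refine lintegral_congr fun a ↦ ?_
  rcases abs_choice a with ha | ha
  · simp only [preimage_ofPred_eq, ha]
  · simp only [preimage_ofPred_eq, ha, mul_neg]
    exact measure_abs_neg_sub_mul_le hν _ _ _

lemma stdNormalCDF_eq_cdf : stdNormalCDF = cdf (gaussianReal 0 1) :=
  funext fun t ↦ (cdf_eq_real _ t).symm

lemma gaussianReal_map_neg_zero (v : ℝ≥0) :
    (gaussianReal 0 v).map (fun t ↦ -t) = gaussianReal 0 v := by
  rw [gaussianReal_map_neg, neg_zero]

lemma stdNormalCDF_neg (t : ℝ) : stdNormalCDF (-t) = 1 - stdNormalCDF t := by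
  have : NullSingletonClass (gaussianReal 0 1) := nullSingletonClass_gaussianReal one_ne_zero
  have hsymm : gaussianReal 0 1 (Iic (-t)) = gaussianReal 0 1 (Ioi t) := by
    conv_lhs => rw [← gaussianReal_map_neg_zero]
    rw [Measure.map_apply measurable_neg measurableSet_Iic, measure_congr Ioi_ae_eq_Ici]
    congr 1
    ext; simp
  rw [stdNormalCDF, stdNormalCDF, hsymm, ← compl_Iic, prob_compl_eq_one_sub measurableSet_Iic,
    ENNReal.toReal_sub_of_le prob_le_one ENNReal.one_ne_top, ENNReal.toReal_one]

lemma stdNormalCDF_sub (a b : ℝ) (hab : a ≤ b) :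
    stdNormalCDF b - stdNormalCDF a = (gaussianReal 0 1).real (Ioc a b) := by
  rw [measureReal_def, ← measure_cdf (gaussianReal 0 1), StieltjesFunction.measure_Ioc,
    ENNReal.toReal_ofReal (sub_nonneg.2 (monotone_cdf _ hab)), stdNormalCDF_eq_cdf]

lemma stdNormalCDF_strictMono : StrictMono stdNormalCDF := by
  intro a b hab
  rw [← sub_pos, stdNormalCDF_sub a b hab.le]
  refine ENNReal.toReal_pos (fun h ↦ ?_) (measure_ne_top _ _)
  have := gaussianReal_absolutelyContinuous' 0 one_ne_zero h
  simp only [Real.volume_Ioc, ENNReal.ofReal_eq_zero, tsub_nonpos] at this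
  exact this.not_gt hab

lemma gaussianReal_real_abs_le (z : ℝ) (hz : 0 ≤ z) :
    (gaussianReal 0 1).real {w | |w| ≤ z} = 2 * stdNormalCDF z - 1 := by
  have : NullSingletonClass (gaussianReal 0 1) := nullSingletonClass_gaussianReal one_ne_zero
  have hIcc : {w : ℝ | |w| ≤ z} = Icc (-z) z := by ext; simp [abs_le]
  rw [hIcc, measureReal_congr Ioc_ae_eq_Icc.symm, ← stdNormalCDF_sub _ _ (by linarith),
    stdNormalCDF_neg]
  ring

lemma nonneg_of_half_le_stdNormalCDF {z : ℝ} (hz : 1 / 2 ≤ stdNormalCDF z) : 0 ≤ z := by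
  by_contra! h
  have := stdNormalCDF_strictMono (show z < -z by linarith)
  rw [stdNormalCDF_neg] at this
  linarith

theorem stmt0_general (x y α z : ℝ)
    (hxy : x ^ 2 + y ^ 2 = 1) (hα : α ∈ Set.Icc (0:ℝ) 1)
    (hz : stdNormalCDF z = 1 - α / 2) :
    (((gaussianReal 0 1).prod (gaussianReal 0 1))
      {p : ℝ × ℝ | -z ≤ x * |p.1| - y * p.2 ∧ x * |p.1| - y * p.2 ≤ z}).toReal
      = 1 - α := by
  have hz0 : 0 ≤ z := nonneg_of_half_le_stdNormalCDF (by linarith [hα.2])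
  have hlaw : ((gaussianReal 0 1).prod (gaussianReal 0 1)).map (fun p ↦ x * p.1 + -y * p.2)
      = gaussianReal 0 1 := by
    rw [gaussianReal_prod_map_linear]
    congr 1
    · simp
    · ext
      simp only [NNReal.coe_add, NNReal.coe_mk, NNReal.coe_one, mul_one, neg_sq, hxy]
  have hpre : {p : ℝ × ℝ | |x * p.1 - y * p.2| ≤ z}
      = (fun p ↦ x * p.1 + -y * p.2) ⁻¹' {w | |w| ≤ z} := by
    ext; simp [sub_eq_add_neg]
  simp_rw [← abs_le]
  rw [measure_prod_abs_fst (gaussianReal_map_neg_zero 1), ← measureReal_def, hpre,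
    ← map_measureReal_apply (by fun_prop) (measurableSet_le (by fun_prop) measurable_const),
    hlaw, gaussianReal_real_abs_le z hz0, hz]
  ring

/-- Lemma 2: if (Z₁, Z₂) is standard bivariate normal, x, y ∈ (0,1) with x² + y² = 1,
α ∈ [0,1] and z is the 1 − α/2 standard normal quantile, then
P(−z ≤ x|Z₁| − yZ₂ ≤ z) = 1 − α. -/
theorem stmt0 (x y α z : ℝ)
    (hx : x ∈ Set.Ioo (0:ℝ) 1) (hy : y ∈ Set.Ioo (0:ℝ) 1)
    (hxy : x ^ 2 + y ^ 2 = 1) (hα : α ∈ Set.Icc (0:ℝ) 1)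
    (hz : stdNormalCDF z = 1 - α / 2) :
    (((gaussianReal 0 1).prod (gaussianReal 0 1))
      {p : ℝ × ℝ | -z ≤ x * |p.1| - y * p.2 ∧ x * |p.1| - y * p.2 ≤ z}).toReal
      = 1 - α :=
  stmt0_general x y α z hxy hα hz
end

section
/- Let f : ℝ → ℝ be Borel measurable and bounded, and suppose there exists w̄ ≤ 0 such that f is nondecreasing through w̄ (i.e., f(w) ≤ f(w̄) for all w ≤ w̄ and f(w) ≥ f(w̄) for all w ≥ w̄). Let W ~ N(0,1). If f(w̄) = E[f(W)], then for all μ ≥ 0, E[f(W + μ)] ≥ E[f(W)]. -/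
/-!
Shifting the mean of `N(0, 1)` by `μ` tilts its density by the likelihood ratio
`L x = exp (μ x - μ² / 2)`, which is nondecreasing when `μ ≥ 0`. Since `f` crosses the
level `c = f w̄` upwards at `w̄` and `L` is monotone, `(f - c) (L - L w̄) ≥ 0` pointwise.
Integrating against `N(0, 1)` and using `E[L(W)] = 1` and `E[f(W)] = c` gives
`E[f(W + μ)] - c = E[(f(W) - c) L(W)] ≥ L w̄ · E[f(W) - c] = 0`.
-/

open MeasureTheory ProbabilityTheory NNReal

lemma gaussianPDFReal_eq_mul_exp (μ : ℝ) (v : ℝ≥0) (x : ℝ) :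
    gaussianPDFReal μ v x = gaussianPDFReal 0 v x * Real.exp ((μ * x - μ ^ 2 / 2) / v) := by
  rw [gaussianPDFReal, gaussianPDFReal, mul_assoc _ (Real.exp _), ← Real.exp_add]
  congr 2
  ring

lemma integral_comp_add_right_gaussianReal {E : Type*} [NormedAddCommGroup E] [NormedSpace ℝ E]
    {v : ℝ≥0} (hv : v ≠ 0) (g : ℝ → E) (μ : ℝ) :
    ∫ x, g (x + μ) ∂gaussianReal 0 v
      = ∫ x, Real.exp ((μ * x - μ ^ 2 / 2) / v) • g x ∂gaussianReal 0 v := by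
  rw [← (measurableEmbedding_addRight μ).integral_map, gaussianReal_map_add_const, zero_add,
    integral_gaussianReal_eq_integral_smul hv, integral_gaussianReal_eq_integral_smul hv]
  simp_rw [gaussianPDFReal_eq_mul_exp μ, mul_smul]

lemma integral_exp_tilt_gaussianReal {v : ℝ≥0} (hv : v ≠ 0) (μ : ℝ) :
    ∫ x, Real.exp ((μ * x - μ ^ 2 / 2) / v) ∂gaussianReal 0 v = 1 := by
  simpa using (integral_comp_add_right_gaussianReal hv (fun _ ↦ (1 : ℝ)) μ).symm

lemma integrable_exp_tilt_gaussianReal (v : ℝ≥0) (μ : ℝ) :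
    Integrable (fun x ↦ Real.exp ((μ * x - μ ^ 2 / 2) / v)) (gaussianReal 0 v) := by
  have := (integrable_exp_mul_gaussianReal (μ := 0) (v := v) (μ / v)).const_mul
    (Real.exp (-(μ ^ 2 / 2) / v))
  refine this.congr (ae_of_all _ fun x ↦ ?_)
  simp only [← Real.exp_add]
  congr 1
  ring

lemma monotone_exp_tilt (v : ℝ≥0) {μ : ℝ} (hμ : 0 ≤ μ) :
    Monotone fun x : ℝ ↦ Real.exp ((μ * x - μ ^ 2 / 2) / v) := by
  refine Real.exp_monotone.comp fun x y hxy ↦ ?_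
  gcongr

lemma sub_mul_sub_nonneg_of_monotone {α : Type*} [LinearOrder α] {f L : α → ℝ} {a : α}
    (hf_le : ∀ x ≤ a, f x ≤ f a) (hf_ge : ∀ x, a ≤ x → f a ≤ f x) (hL : Monotone L) (x : α) :
    0 ≤ (f x - f a) * (L x - L a) := by
  rcases le_total x a with hxa | hax
  · exact mul_nonneg_of_nonpos_of_nonpos (sub_nonpos.2 (hf_le x hxa)) (sub_nonpos.2 (hL hxa))
  · exact mul_nonneg (sub_nonneg.2 (hf_ge x hax)) (sub_nonneg.2 (hL hax))

lemma mul_integral_le_integral_mul_of_sub_mul_sub_nonneg {α : Type*} [MeasurableSpace α]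
    {ν : Measure α} [IsProbabilityMeasure ν] {f L : α → ℝ} {c k : ℝ}
    (hf : Integrable f ν) (hL : Integrable L ν) (hfL : Integrable (fun x ↦ f x * L x) ν)
    (hmean : ∫ x, f x ∂ν = c) (hcross : ∀ᵐ x ∂ν, 0 ≤ (f x - c) * (L x - k)) :
    c * ∫ x, L x ∂ν ≤ ∫ x, f x * L x ∂ν := by
  have hexpand : (fun x ↦ (f x - c) * (L x - k))
      = fun x ↦ (f x * L x - c * L x) - (k * f x - k * c) := by
    ext x; ring
  have key := integral_nonneg_of_ae hcross
  rw [hexpand, integral_sub (by exact hfL.sub (hL.const_mul c))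
      (by exact (hf.const_mul k).sub (integrable_const _)),
    integral_sub hfL (hL.const_mul c), integral_sub (hf.const_mul k) (integrable_const _),
    integral_const_mul, integral_const_mul, hmean, integral_const] at key
  simp only [probReal_univ, one_smul] at key
  linarith

theorem stmt2_general (f : ℝ → ℝ) (wbar : ℝ)
    (hf_meas : Measurable f) (hf_bdd : ∃ C, ∀ w, |f w| ≤ C)
    (hmono₁ : ∀ w ≤ wbar, f w ≤ f wbar)
    (hmono₂ : ∀ w, wbar ≤ w → f wbar ≤ f w)
    (hq : f wbar = ∫ w, f w ∂(gaussianReal 0 1)) :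
    ∀ μ ≥ (0:ℝ),
      (∫ w, f w ∂(gaussianReal 0 1)) ≤ ∫ w, f (w + μ) ∂(gaussianReal 0 1) := by
  intro μ hμ
  obtain ⟨C, hC⟩ := hf_bdd
  have hf_bound : ∀ᵐ w ∂gaussianReal 0 1, ‖f w‖ ≤ C := ae_of_all _ hC
  have hL_int := integrable_exp_tilt_gaussianReal 1 μ
  have hcross := sub_mul_sub_nonneg_of_monotone hmono₁ hmono₂ (monotone_exp_tilt 1 hμ)
  have key := mul_integral_le_integral_mul_of_sub_mul_sub_nonneg
    (Integrable.of_bound hf_meas.aestronglyMeasurable C hf_bound) hL_int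
    (hL_int.bdd_mul hf_meas.aestronglyMeasurable hf_bound) hq.symm (ae_of_all _ hcross)
  rw [integral_exp_tilt_gaussianReal one_ne_zero, mul_one] at key
  rw [integral_comp_add_right_gaussianReal one_ne_zero, ← hq]
  simpa only [smul_eq_mul, mul_comm] using key

/-- Translation Lemma: if f is Borel measurable, bounded, nondecreasing through some
w̄ ≤ 0, and f(w̄) = E[f(W)] for W standard normal, then E[f(W + μ)] ≥ E[f(W)]
for all μ ≥ 0. -/
theorem stmt2 (f : ℝ → ℝ) (wbar : ℝ)
    (hf_meas : Measurable f) (hf_bdd : ∃ C, ∀ w, |f w| ≤ C)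
    (hwbar : wbar ≤ 0)
    (hmono₁ : ∀ w ≤ wbar, f w ≤ f wbar)
    (hmono₂ : ∀ w, wbar ≤ w → f wbar ≤ f w)
    (hq : f wbar = ∫ w, f w ∂(gaussianReal 0 1)) :
    ∀ μ ≥ (0:ℝ),
      (∫ w, f w ∂(gaussianReal 0 1)) ≤ ∫ w, f (w + μ) ∂(gaussianReal 0 1) :=
  stmt2_general f wbar hf_meas hf_bdd hmono₁ hmono₂ hq
end

section
/- Define g(μ) = E[f(W + μ)] − q, where W ~ N(0,1), f : ℝ → ℝ is Borel measurable and bounded, q = E[f(W)], and f is nondecreasing through w̄ with f(w̄) = q. Then for every μ, the derivative satisfies g'(μ) ≥ (w̄ − μ)·g(μ). -/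
/-!
The law of `W + μ` has density `φ(x - μ)`, and `∂_μ φ(x - μ) = (x - μ) φ(x - μ)` is dominated,
uniformly for `|μ - μ₀| ≤ 1`, by a multiple of `exp(-(x - μ₀)²/8)`. Differentiating under the
integral gives `g'(μ) = E[f(X)(X - μ)]` for `X ~ N(μ, 1)`. Since `E[X] = μ`,
`g'(μ) - (w̄ - μ) g(μ) = E[(f(X) - q)(X - w̄)]`, and the integrand is nonnegative because
`f - q = f - f(w̄)` has the sign of `x - w̄`.
-/

open MeasureTheory ProbabilityTheory Real
open scoped NNReal

lemma hasDerivAt_gaussianPDFReal_mean (v : ℝ≥0) (x μ : ℝ) :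
    HasDerivAt (fun m ↦ gaussianPDFReal m v x) ((x - μ) / v * gaussianPDFReal μ v x) μ := by
  have h : HasDerivAt (fun m ↦ -(x - m) ^ 2 / (2 * v)) ((x - μ) / v) μ :=
    ((((hasDerivAt_id' μ).const_sub x).fun_pow 2).neg.div_const (2 * (v : ℝ))).congr_deriv
      (by simp only [Nat.cast_ofNat]; ring)
  exact (h.exp.const_mul (√(2 * π * v))⁻¹).congr_deriv (by rw [gaussianPDFReal]; ring)

lemma abs_mul_exp_neg_sq_div_two_le (t : ℝ) : |t| * exp (-t ^ 2 / 2) ≤ exp (-t ^ 2 / 4) := by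
  have ht : |t| ≤ exp (t ^ 2 / 4) := by
    nlinarith [sq_abs t, sq_nonneg (|t| - 2), add_one_le_exp (t ^ 2 / 4)]
  calc |t| * exp (-t ^ 2 / 2) ≤ exp (t ^ 2 / 4) * exp (-t ^ 2 / 2) := by gcongr
    _ = exp (-t ^ 2 / 4) := by rw [← exp_add]; ring_nf

lemma exp_neg_sq_div_four_le {a b : ℝ} (h : |a - b| ≤ 1) :
    exp (-a ^ 2 / 4) ≤ exp (1 / 4) * exp (-(1 / 8) * b ^ 2) := by
  rw [← exp_add, exp_le_exp]
  -- b² ≤ 2a² + 2(a - b)²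
  nlinarith [sq_nonneg (b - 2 * (b - a)), sq_abs (a - b), abs_nonneg (a - b)]

lemma abs_gaussianPDFReal_mul_sub_le {μ μ₀ : ℝ} (h : |μ - μ₀| ≤ 1) (x : ℝ) :
    |gaussianPDFReal μ 1 x * (x - μ)| ≤
      (√(2 * π))⁻¹ * exp (1 / 4) * exp (-(1 / 8) * (x - μ₀) ^ 2) := by
  have hx : |(x - μ) - (x - μ₀)| ≤ 1 := by rwa [sub_sub_sub_cancel_left, abs_sub_comm]
  calc |gaussianPDFReal μ 1 x * (x - μ)|
      = (√(2 * π))⁻¹ * (|x - μ| * exp (-(x - μ) ^ 2 / 2)) := by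
        simp only [gaussianPDFReal, NNReal.coe_one, mul_one, abs_mul, abs_of_pos (exp_pos _),
          abs_inv, abs_of_nonneg (sqrt_nonneg _)]
        ring
    _ ≤ (√(2 * π))⁻¹ * (exp (1 / 4) * exp (-(1 / 8) * (x - μ₀) ^ 2)) :=
        mul_le_mul_of_nonneg_left
          ((abs_mul_exp_neg_sq_div_two_le _).trans (exp_neg_sq_div_four_le hx)) (by positivity)
    _ = _ := by ring

lemma hasDerivAt_integral_gaussianPDFReal_mul {f : ℝ → ℝ} {C : ℝ} (hf : AEStronglyMeasurable f)
    (hC : ∀ x, |f x| ≤ C) (μ₀ : ℝ) :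
    HasDerivAt (fun μ ↦ ∫ x, gaussianPDFReal μ 1 x * f x)
      (∫ x, gaussianPDFReal μ₀ 1 x * (f x * (x - μ₀))) μ₀ := by
  have hpdf (μ : ℝ) : AEStronglyMeasurable (gaussianPDFReal μ 1) :=
    (measurable_gaussianPDFReal μ 1).aestronglyMeasurable
  have hbound : Integrable fun x ↦
      C * ((√(2 * π))⁻¹ * exp (1 / 4) * exp (-(1 / 8) * (x - μ₀) ^ 2)) :=
    (((integrable_exp_neg_mul_sq (by norm_num : (0 : ℝ) < 1 / 8)).comp_sub_right μ₀).const_mul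
      _).const_mul C
  refine (hasDerivAt_integral_of_dominated_loc_of_deriv_le
    (F := fun μ x ↦ gaussianPDFReal μ 1 x * f x)
    (F' := fun μ x ↦ gaussianPDFReal μ 1 x * (f x * (x - μ)))
    (Metric.closedBall_mem_nhds μ₀ one_pos) (.of_forall fun μ ↦ (hpdf μ).mul hf)
    ((integrable_gaussianPDFReal μ₀ 1).mul_bdd hf (ae_of_all _ hC))
    ((hpdf μ₀).mul (hf.mul (measurable_id.sub_const μ₀).aestronglyMeasurable)) (ae_of_all _ fun x μ hμ ↦ ?_) hbound
    (ae_of_all _ fun x μ _ ↦ ?_)).2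
  · rw [Real.norm_eq_abs, mul_left_comm, abs_mul]
    exact mul_le_mul (hC x) (abs_gaussianPDFReal_mul_sub_le hμ x) (abs_nonneg _)
      ((abs_nonneg _).trans (hC x))
  · exact ((hasDerivAt_gaussianPDFReal_mean 1 x μ).mul_const (f x)).congr_deriv
      (by rw [NNReal.coe_one, div_one]; ring)

lemma hasDerivAt_integral_gaussianReal {f : ℝ → ℝ} {C : ℝ} (hf : AEStronglyMeasurable f)
    (hC : ∀ x, |f x| ≤ C) (μ₀ : ℝ) :
    HasDerivAt (fun μ ↦ ∫ x, f x ∂gaussianReal μ 1) (∫ x, f x * (x - μ₀) ∂gaussianReal μ₀ 1) μ₀ := by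
  simp only [integral_gaussianReal_eq_integral_smul one_ne_zero, smul_eq_mul]
  exact hasDerivAt_integral_gaussianPDFReal_mul hf hC μ₀

lemma integral_comp_add_gaussianReal {f : ℝ → ℝ} {μ : ℝ} {v : ℝ≥0} (m : ℝ)
    (hf : AEStronglyMeasurable f (gaussianReal (μ + m) v)) :
    ∫ w, f (w + m) ∂gaussianReal μ v = ∫ x, f x ∂gaussianReal (μ + m) v := by
  rw [← gaussianReal_map_add_const] at hf ⊢
  exact (integral_map (by fun_prop) hf).symm

lemma integral_sub_mul_sub_eq {P : Measure ℝ} [IsProbabilityMeasure P] {f : ℝ → ℝ} {C : ℝ}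
    (hf : AEStronglyMeasurable f P) (hC : ∀ x, |f x| ≤ C) (hid : Integrable id P) (q w : ℝ) :
    ∫ x, (f x - q) * (x - w) ∂P =
      ∫ x, f x * (x - ∫ y, y ∂P) ∂P - (w - ∫ y, y ∂P) * (∫ x, f x ∂P - q) := by
  set m := ∫ y, y ∂P
  have hfint : Integrable f P := .of_bound hf C (ae_of_all _ hC)
  have hx : Integrable (fun x ↦ x) P := hid
  have hfx : Integrable (fun x ↦ f x * (x - m)) P :=
    (hx.sub (integrable_const m)).bdd_mul hf (ae_of_all _ hC)
  have hlin : Integrable (fun x ↦ q * (x - w)) P := (hx.sub (integrable_const w)).const_mul q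
  have hexpand : ∀ x, (f x - q) * (x - w) = f x * (x - m) - ((w - m) * f x + q * (x - w)) :=
    fun x ↦ by ring
  simp_rw [hexpand]
  rw [integral_sub hfx ((hfint.const_mul (w - m)).fun_add hlin), integral_add (hfint.const_mul _) hlin,
    integral_const_mul, integral_const_mul, integral_sub hx (integrable_const w)]
  simp only [integral_const, probReal_univ, smul_eq_mul, one_mul]
  ring

lemma sub_mul_sub_nonneg_of_le_of_le {f : ℝ → ℝ} {w : ℝ} (h₁ : ∀ x ≤ w, f x ≤ f w)
    (h₂ : ∀ x, w ≤ x → f w ≤ f x) (x : ℝ) : 0 ≤ (f x - f w) * (x - w) := by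
  rcases le_total x w with hx | hx
  · exact mul_nonneg_of_nonpos_of_nonpos (sub_nonpos.2 (h₁ x hx)) (sub_nonpos.2 hx)
  · exact mul_nonneg (sub_nonneg.2 (h₂ x hx)) (sub_nonneg.2 hx)

theorem stmt3_general (f : ℝ → ℝ) (wbar q : ℝ) (g : ℝ → ℝ)
    (hf_meas : Measurable f) (hf_bdd : ∃ C, ∀ w, |f w| ≤ C)
    (hmono₁ : ∀ w ≤ wbar, f w ≤ f wbar)
    (hmono₂ : ∀ w, wbar ≤ w → f wbar ≤ f w)
    (hfw : f wbar = q)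
    (hg : ∀ μ, g μ = (∫ w, f (w + μ) ∂(gaussianReal 0 1)) - q) :
    ∀ μ : ℝ, DifferentiableAt ℝ g μ ∧ (wbar - μ) * g μ ≤ deriv g μ := by
  obtain ⟨C, hC⟩ := hf_bdd
  have hg_eq : g = fun μ ↦ (∫ x, f x ∂gaussianReal μ 1) - q := by
    funext μ
    rw [hg, integral_comp_add_gaussianReal μ hf_meas.aestronglyMeasurable, zero_add]
  intro μ
  have hderiv : HasDerivAt g (∫ x, f x * (x - μ) ∂gaussianReal μ 1) μ :=
    hg_eq ▸ (hasDerivAt_integral_gaussianReal hf_meas.aestronglyMeasurable hC μ).sub_const q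
  refine ⟨hderiv.differentiableAt, ?_⟩
  have hsplit := integral_sub_mul_sub_eq hf_meas.aestronglyMeasurable hC
    ((memLp_id_gaussianReal 1).integrable le_rfl) q wbar (P := gaussianReal μ 1)
  rw [integral_id_gaussianReal] at hsplit
  have hnonneg : 0 ≤ ∫ x, (f x - q) * (x - wbar) ∂gaussianReal μ 1 :=
    integral_nonneg fun x ↦ hfw ▸ sub_mul_sub_nonneg_of_le_of_le hmono₁ hmono₂ x
  rw [hderiv.deriv, hg_eq]
  linarith

/-- Differential inequality step: with g(μ) = E[f(W + μ)] − q, q = E[f(W)],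
f Borel measurable and bounded, f nondecreasing through w̄ with f(w̄) = q,
the derivative of g satisfies g'(μ) ≥ (w̄ − μ)·g(μ) for every μ. -/
theorem stmt3 (f : ℝ → ℝ) (wbar q : ℝ) (g : ℝ → ℝ)
    (hf_meas : Measurable f) (hf_bdd : ∃ C, ∀ w, |f w| ≤ C)
    (hmono₁ : ∀ w ≤ wbar, f w ≤ f wbar)
    (hmono₂ : ∀ w, wbar ≤ w → f wbar ≤ f w)
    (hq : q = ∫ w, f w ∂(gaussianReal 0 1))
    (hfw : f wbar = q)
    (hg : ∀ μ, g μ = (∫ w, f (w + μ) ∂(gaussianReal 0 1)) - q) :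
    ∀ μ : ℝ, DifferentiableAt ℝ g μ ∧ (wbar - μ) * g μ ≤ deriv g μ :=
  stmt3_general f wbar q g hf_meas hf_bdd hmono₁ hmono₂ hfw hg
end

section
/- Suppose g : ℝ → ℝ is differentiable, g(0) = 0, and g'(μ) ≥ (w̄ − μ)·g(μ) for all μ ≥ 0, where w̄ ≤ 0. Then g(μ) ≥ 0 for all μ ≥ 0. -/
/-! Integrating factor: with `E μ = exp (μ²/2 − w̄ μ)` we have `E' = (μ − w̄) E`, so the hypothesis
says exactly that `(g E)' = E (g' + (μ − w̄) g) ≥ 0`. Hence `g E` is nondecreasing on `[0, ∞)`,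
starts at `0`, and `g` has the sign of `g E`. -/

open Real Set

theorem monotoneOn_mul_exp_of_neg_mul_le_deriv {g a A : ℝ → ℝ} {x₀ : ℝ}
    (hgc : ContinuousOn g (Ici x₀)) (hgd : DifferentiableOn ℝ g (Ioi x₀))
    (hA : ∀ x, HasDerivAt A (a x) x) (h : ∀ x > x₀, -a x * g x ≤ deriv g x) :
    MonotoneOn (fun x => g x * exp (A x)) (Ici x₀) := by
  have hexp : Continuous fun x => exp (A x) :=
    continuous_exp.comp (continuous_iff_continuousAt.2 fun x => (hA x).continuousAt)
  refine monotoneOn_of_deriv_nonneg (convex_Ici x₀) (hgc.mul hexp.continuousOn) ?_ ?_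
  all_goals rw [interior_Ici]
  · exact hgd.mul fun x _ => (hA x).differentiableAt.exp.differentiableWithinAt
  · intro x hx
    have hgx : HasDerivAt g (deriv g x) x :=
      (hgd.differentiableAt (Ioi_mem_nhds hx)).hasDerivAt
    have hprod : HasDerivAt (fun x => g x * exp (A x))
        (deriv g x * exp (A x) + g x * (exp (A x) * a x)) x := hgx.mul (hA x).exp
    rw [hprod.deriv]
    have key : 0 ≤ deriv g x + a x * g x := by linarith [h x hx]
    calc (0 : ℝ) ≤ exp (A x) * (deriv g x + a x * g x) := mul_nonneg (exp_pos _).le key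
      _ = _ := by ring

theorem nonneg_of_neg_mul_le_deriv {g a A : ℝ → ℝ} {x₀ : ℝ}
    (hgc : ContinuousOn g (Ici x₀)) (hgd : DifferentiableOn ℝ g (Ioi x₀))
    (hA : ∀ x, HasDerivAt A (a x) x) (h : ∀ x > x₀, -a x * g x ≤ deriv g x)
    (h₀ : 0 ≤ g x₀) : ∀ x ≥ x₀, 0 ≤ g x := by
  intro x hx
  have hmono := monotoneOn_mul_exp_of_neg_mul_le_deriv hgc hgd hA h self_mem_Ici hx hx
  have : 0 ≤ g x * exp (A x) := (mul_nonneg h₀ (exp_pos _).le).trans hmono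
  exact (mul_nonneg_iff_of_pos_right (exp_pos _)).1 this

theorem stmt4_general (g : ℝ → ℝ) (wbar : ℝ)
    (hg : Differentiable ℝ g) (h0 : g 0 = 0)
    (hderiv : ∀ μ ≥ (0:ℝ), (wbar - μ) * g μ ≤ deriv g μ) :
    ∀ μ ≥ (0:ℝ), 0 ≤ g μ := by
  have hA : ∀ x : ℝ, HasDerivAt (fun x => x ^ 2 / 2 - wbar * x) (x - wbar) x := fun x =>
    (((hasDerivAt_pow 2 x).div_const 2).sub ((hasDerivAt_id x).const_mul wbar)).congr_deriv
      (by simp)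
  refine nonneg_of_neg_mul_le_deriv hg.continuous.continuousOn hg.differentiableOn hA
    (fun x hx => ?_) h0.ge
  rw [neg_sub]
  exact hderiv x hx.le

/-- If g is differentiable, g(0) = 0, and g'(μ) ≥ (w̄ − μ)·g(μ) for all μ ≥ 0 with
w̄ ≤ 0, then g(μ) ≥ 0 for all μ ≥ 0. -/
theorem stmt4 (g : ℝ → ℝ) (wbar : ℝ) (hw : wbar ≤ 0)
    (hg : Differentiable ℝ g) (h0 : g 0 = 0)
    (hderiv : ∀ μ ≥ (0:ℝ), (wbar - μ) * g μ ≤ deriv g μ) :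
    ∀ μ ≥ (0:ℝ), 0 ≤ g μ :=
  stmt4_general g wbar hg h0 hderiv
end

section
/- Let a₁, a₂ > 0 with a₁² + a₂² = 1, b ≤ 0, z > 0, and c̈ = a₁⁻¹(1 − a₂)z. For θ = (θ₁, θ₂) ∈ ℝ², let g(θ) = a₁θ₁ + a₂θ₂ + b and θ̈ = θ − a·g(θ) with a = (a₁, a₂). Define the interval [ℓ(θ), u(θ)] by ℓ(θ) = θ₁ − z if g(θ) ≤ c̈ and ℓ(θ) = θ̈₁ − a₂z if g(θ) > c̈; u(θ) = θ₁ + z if g(θ) ≤ −c̈ and u(θ) = θ̈₁ + a₂z if g(θ) > −c̈. Then 0 ∈ [ℓ(θ), u(θ)] if and only if LB(θ₂) ≤ θ₁ ≤ UB(θ₂), where LB(θ₂) = max(a₁a₂⁻¹(θ₂ + a₂⁻¹b) − a₂⁻¹z, −z) and UB(θ₂) = max(a₁a₂⁻¹(θ₂ + a₂⁻¹b) + a₂⁻¹z, z). -/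
/-!
Both endpoints are minima of their two branches, because each switch happens exactly where the
branches cross: with `g = g(θ)` and `a₁ c̈ = (1 - a₂) z`,
`(θ̈₁ - a₂ z) - (θ₁ - z) = a₁ (c̈ - g)` and `(θ̈₁ + a₂ z) - (θ₁ + z) = a₁ (-c̈ - g)`.
Hence `ℓ ≤ 0 ≤ u` splits into four linear conditions on `θ₁`, and `θ̈₁ = a₂² (θ₁ - m)` with
`m = a₁ a₂⁻¹ (θ₂ + a₂⁻¹ b)` turns the two involving `θ̈₁` into `θ₁ ≤ m + a₂⁻¹ z` and
`m - a₂⁻¹ z ≤ θ₁`.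
-/

theorem ite_le_eq_min_of_sub_eq_mul_sub {α : Type*} [Field α] [LinearOrder α]
    [IsStrictOrderedRing α] {k g c p q : α} (hk : 0 < k) (h : q - p = k * (c - g)) :
    (if g ≤ c then p else q) = min p q := by
  split_ifs with hg
  · exact (min_eq_left (by nlinarith)).symm
  · exact (min_eq_right (by nlinarith)).symm

namespace IICI

variable {a₁ a₂ b z c θ₁ θ₂ : ℝ}

theorem lower_eq_min (ha₁ : 0 < a₁) (hc : c = a₁⁻¹ * (1 - a₂) * z) :
    (if a₁ * θ₁ + a₂ * θ₂ + b ≤ c then θ₁ - z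
      else (θ₁ - a₁ * (a₁ * θ₁ + a₂ * θ₂ + b)) - a₂ * z) =
      min (θ₁ - z) ((θ₁ - a₁ * (a₁ * θ₁ + a₂ * θ₂ + b)) - a₂ * z) := by
  refine ite_le_eq_min_of_sub_eq_mul_sub ha₁ ?_
  rw [hc]
  field_simp
  ring

theorem upper_eq_min (ha₁ : 0 < a₁) (hc : c = a₁⁻¹ * (1 - a₂) * z) :
    (if a₁ * θ₁ + a₂ * θ₂ + b ≤ -c then θ₁ + z
      else (θ₁ - a₁ * (a₁ * θ₁ + a₂ * θ₂ + b)) + a₂ * z) =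
      min (θ₁ + z) ((θ₁ - a₁ * (a₁ * θ₁ + a₂ * θ₂ + b)) + a₂ * z) := by
  refine ite_le_eq_min_of_sub_eq_mul_sub ha₁ ?_
  rw [hc]
  field_simp
  ring

theorem sub_mul_eq_sq_mul (ha₂ : a₂ ≠ 0) (ha : a₁ ^ 2 + a₂ ^ 2 = 1) :
    θ₁ - a₁ * (a₁ * θ₁ + a₂ * θ₂ + b) = a₂ ^ 2 * (θ₁ - a₁ * a₂⁻¹ * (θ₂ + a₂⁻¹ * b)) := by
  field_simp
  linear_combination (-θ₁) * ha

theorem sub_mul_sub_nonpos_iff (ha₂ : 0 < a₂) (ha : a₁ ^ 2 + a₂ ^ 2 = 1) :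
    (θ₁ - a₁ * (a₁ * θ₁ + a₂ * θ₂ + b)) - a₂ * z ≤ 0 ↔
      θ₁ ≤ a₁ * a₂⁻¹ * (θ₂ + a₂⁻¹ * b) + a₂⁻¹ * z := by
  have h : (θ₁ - a₁ * (a₁ * θ₁ + a₂ * θ₂ + b)) - a₂ * z =
      -(a₂ ^ 2 * (a₁ * a₂⁻¹ * (θ₂ + a₂⁻¹ * b) + a₂⁻¹ * z - θ₁)) := by
    rw [sub_mul_eq_sq_mul ha₂.ne' ha]
    field_simp
    ring
  rw [h, neg_nonpos, mul_nonneg_iff_of_pos_left (by positivity), sub_nonneg]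

theorem nonneg_sub_mul_add_iff (ha₂ : 0 < a₂) (ha : a₁ ^ 2 + a₂ ^ 2 = 1) :
    0 ≤ (θ₁ - a₁ * (a₁ * θ₁ + a₂ * θ₂ + b)) + a₂ * z ↔
      a₁ * a₂⁻¹ * (θ₂ + a₂⁻¹ * b) - a₂⁻¹ * z ≤ θ₁ := by
  have h : (θ₁ - a₁ * (a₁ * θ₁ + a₂ * θ₂ + b)) + a₂ * z =
      a₂ ^ 2 * (θ₁ - (a₁ * a₂⁻¹ * (θ₂ + a₂⁻¹ * b) - a₂⁻¹ * z)) := by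
    rw [sub_mul_eq_sq_mul ha₂.ne' ha]
    field_simp
    ring
  rw [h, mul_nonneg_iff_of_pos_left (by positivity), sub_nonneg]

end IICI

theorem stmt6_general (a₁ a₂ b z c θ₁ θ₂ ℓ u : ℝ)
    (ha₁ : 0 < a₁) (ha₂ : 0 < a₂) (ha : a₁ ^ 2 + a₂ ^ 2 = 1)
    (hc : c = a₁⁻¹ * (1 - a₂) * z)
    (hℓ : ℓ = if a₁ * θ₁ + a₂ * θ₂ + b ≤ c then θ₁ - z
      else (θ₁ - a₁ * (a₁ * θ₁ + a₂ * θ₂ + b)) - a₂ * z)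
    (hu : u = if a₁ * θ₁ + a₂ * θ₂ + b ≤ -c then θ₁ + z
      else (θ₁ - a₁ * (a₁ * θ₁ + a₂ * θ₂ + b)) + a₂ * z) :
    (ℓ ≤ 0 ∧ 0 ≤ u) ↔
      (max (a₁ * a₂⁻¹ * (θ₂ + a₂⁻¹ * b) - a₂⁻¹ * z) (-z) ≤ θ₁ ∧
       θ₁ ≤ max (a₁ * a₂⁻¹ * (θ₂ + a₂⁻¹ * b) + a₂⁻¹ * z) z) := by
  rw [hℓ, hu, IICI.lower_eq_min ha₁ hc, IICI.upper_eq_min ha₁ hc, min_le_iff, le_min_iff,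
    IICI.sub_mul_sub_nonpos_iff ha₂ ha, IICI.nonneg_sub_mul_add_iff ha₂ ha, max_le_iff, le_max_iff,
    sub_nonpos, ← neg_le_iff_add_nonneg]
  tauto

/-- Lemma 1 (acceptance region): in the canonical two-dimensional representation,
0 ∈ [ℓ(θ), u(θ)] if and only if LB(θ₂) ≤ θ₁ ≤ UB(θ₂). -/
theorem stmt6 (a₁ a₂ b z c θ₁ θ₂ ℓ u : ℝ)
    (ha₁ : 0 < a₁) (ha₂ : 0 < a₂) (ha : a₁ ^ 2 + a₂ ^ 2 = 1)
    (hb : b ≤ 0) (hz : 0 < z) (hc : c = a₁⁻¹ * (1 - a₂) * z)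
    (hℓ : ℓ = if a₁ * θ₁ + a₂ * θ₂ + b ≤ c then θ₁ - z
      else (θ₁ - a₁ * (a₁ * θ₁ + a₂ * θ₂ + b)) - a₂ * z)
    (hu : u = if a₁ * θ₁ + a₂ * θ₂ + b ≤ -c then θ₁ + z
      else (θ₁ - a₁ * (a₁ * θ₁ + a₂ * θ₂ + b)) + a₂ * z) :
    (ℓ ≤ 0 ∧ 0 ≤ u) ↔
      (max (a₁ * a₂⁻¹ * (θ₂ + a₂⁻¹ * b) - a₂⁻¹ * z) (-z) ≤ θ₁ ∧
       θ₁ ≤ max (a₁ * a₂⁻¹ * (θ₂ + a₂⁻¹ * b) + a₂⁻¹ * z) z) :=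
  stmt6_general a₁ a₂ b z c θ₁ θ₂ ℓ u ha₁ ha₂ ha hc hℓ hu
end

section
/- Let θ̂ ~ N(0, I₂) in ℝ², let a = (a₁, a₂) with a₁, a₂ > 0 and a₁² + a₂² = 1, b = 0, and z = z_{1−α/2}. Let x = √((1−a₂)/2), y = √((1+a₂)/2), and Ω = [[x, y],[y, −x]], Z = Ω·θ̂. Define the acceptance region A = {θ : max(a₁a₂⁻¹θ₂ − a₂⁻¹z, −z) ≤ θ₁ ≤ max(a₁a₂⁻¹θ₂ + a₂⁻¹z, z)} and B = {(Z₁,Z₂) : −z ≤ x|Z₁| − y·Z₂ ≤ z}. Then θ̂ ∈ A if and only if Z ∈ B. -/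
/-!
With `x = √((1 - a₂)/2)` and `y = √((1 + a₂)/2)` one has `x² - y² = -a₂`, `x² + y² = 1` and
`2xy = a₁`, so `x Z₁ - y Z₂ = a₁ θ₂ - a₂ θ₁` and `-x Z₁ - y Z₂ = -θ₁`. Hence
`x |Z₁| - y Z₂ = max (a₁ θ₂ - a₂ θ₁) (-θ₁)`, and both sides of the equivalence say that this
maximum lies in `[-z, z]`.
-/

lemma two_mul_sqrt_half_sub_mul_sqrt_half_add {a₁ a₂ : ℝ} (ha₁ : 0 ≤ a₁)
    (ha : a₁ ^ 2 + a₂ ^ 2 = 1) :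
    2 * (√((1 - a₂) / 2) * √((1 + a₂) / 2)) = a₁ := by
  have h : 0 ≤ (1 - a₂) / 2 := by nlinarith
  rw [← Real.sqrt_mul h,
    show (1 - a₂) / 2 * ((1 + a₂) / 2) = (a₁ / 2) ^ 2 by linear_combination -ha / 4,
    Real.sqrt_sq (by positivity)]
  ring

lemma mul_abs_sub_mul_eq_max {x y Z₁ Z₂ : ℝ} (hx : 0 ≤ x) :
    x * |Z₁| - y * Z₂ = max (x * Z₁ - y * Z₂) (-(x * Z₁) - y * Z₂) := by
  rw [abs_eq_max_neg, mul_max_of_nonneg _ _ hx, max_sub_sub_right, mul_neg]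

lemma mul_abs_sub_mul_reflection_eq_max {c s x y θ₁ θ₂ : ℝ} (hx : 0 ≤ x)
    (hx2 : x ^ 2 = (1 - c) / 2) (hy2 : y ^ 2 = (1 + c) / 2) (hxy : 2 * (x * y) = s) :
    x * |x * θ₁ + y * θ₂| - y * (y * θ₁ - x * θ₂) = max (s * θ₂ - c * θ₁) (-θ₁) := by
  rw [mul_abs_sub_mul_eq_max hx]
  congr 1
  · linear_combination θ₁ * hx2 - θ₁ * hy2 + θ₂ * hxy
  · linear_combination -θ₁ * hx2 - θ₁ * hy2

lemma max_le_and_le_max_iff_max_mem_Icc {a₁ a₂ z θ₁ θ₂ : ℝ} (ha₂ : 0 < a₂) :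
    (max (a₁ * a₂⁻¹ * θ₂ - a₂⁻¹ * z) (-z) ≤ θ₁ ∧ θ₁ ≤ max (a₁ * a₂⁻¹ * θ₂ + a₂⁻¹ * z) z) ↔
      (-z ≤ max (a₁ * θ₂ - a₂ * θ₁) (-θ₁) ∧ max (a₁ * θ₂ - a₂ * θ₁) (-θ₁) ≤ z) := by
  have lower : a₁ * a₂⁻¹ * θ₂ - a₂⁻¹ * z ≤ θ₁ ↔ a₁ * θ₂ - a₂ * θ₁ ≤ z := by
    rw [← sub_nonneg, ← sub_nonneg (b := a₁ * θ₂ - a₂ * θ₁),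
      show θ₁ - (a₁ * a₂⁻¹ * θ₂ - a₂⁻¹ * z) = a₂⁻¹ * (z - (a₁ * θ₂ - a₂ * θ₁)) by
        field_simp; ring]
    exact mul_nonneg_iff_of_pos_left (inv_pos.2 ha₂)
  have upper : θ₁ ≤ a₁ * a₂⁻¹ * θ₂ + a₂⁻¹ * z ↔ -z ≤ a₁ * θ₂ - a₂ * θ₁ := by
    rw [← sub_nonneg, ← sub_nonneg (a := a₁ * θ₂ - a₂ * θ₁),
      show a₁ * a₂⁻¹ * θ₂ + a₂⁻¹ * z - θ₁ = a₂⁻¹ * (a₁ * θ₂ - a₂ * θ₁ - -z) by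
        field_simp; ring]
    exact mul_nonneg_iff_of_pos_left (inv_pos.2 ha₂)
  simp only [max_le_iff, le_max_iff, lower, upper, neg_le_neg_iff, neg_le]
  tauto

theorem stmt8_general (a₁ a₂ z x y θ₁ θ₂ Z₁ Z₂ : ℝ)
    (ha₁ : 0 < a₁) (ha₂ : 0 < a₂) (ha : a₁ ^ 2 + a₂ ^ 2 = 1)
    (hx : x = Real.sqrt ((1 - a₂) / 2)) (hy : y = Real.sqrt ((1 + a₂) / 2))
    (hZ₁ : Z₁ = x * θ₁ + y * θ₂) (hZ₂ : Z₂ = y * θ₁ - x * θ₂) :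
    (max (a₁ * a₂⁻¹ * θ₂ - a₂⁻¹ * z) (-z) ≤ θ₁ ∧
      θ₁ ≤ max (a₁ * a₂⁻¹ * θ₂ + a₂⁻¹ * z) z) ↔
    (-z ≤ x * |Z₁| - y * Z₂ ∧ x * |Z₁| - y * Z₂ ≤ z) := by
  have ha₂_le : a₂ ≤ 1 := by nlinarith
  have hx2 : x ^ 2 = (1 - a₂) / 2 := by rw [hx, Real.sq_sqrt (by linarith)]
  have hy2 : y ^ 2 = (1 + a₂) / 2 := by rw [hy, Real.sq_sqrt (by linarith)]
  have hxy : 2 * (x * y) = a₁ := hx ▸ hy ▸ two_mul_sqrt_half_sub_mul_sqrt_half_add ha₁.le ha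
  rw [hZ₁, hZ₂, mul_abs_sub_mul_reflection_eq_max (hx ▸ Real.sqrt_nonneg _) hx2 hy2 hxy]
  exact max_le_and_le_max_iff_max_mem_Icc ha₂

/-- Claim 1 in the proof of Theorem 2: with Z = Ωθ̂ for the orthogonal matrix
Ω = [[x, y],[y, −x]], the event θ̂ ∈ A holds if and only if Z ∈ B. -/
theorem stmt8 (a₁ a₂ z x y θ₁ θ₂ Z₁ Z₂ : ℝ)
    (ha₁ : 0 < a₁) (ha₂ : 0 < a₂) (ha : a₁ ^ 2 + a₂ ^ 2 = 1) (hz : 0 < z)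
    (hx : x = Real.sqrt ((1 - a₂) / 2)) (hy : y = Real.sqrt ((1 + a₂) / 2))
    (hZ₁ : Z₁ = x * θ₁ + y * θ₂) (hZ₂ : Z₂ = y * θ₁ - x * θ₂) :
    (max (a₁ * a₂⁻¹ * θ₂ - a₂⁻¹ * z) (-z) ≤ θ₁ ∧
      θ₁ ≤ max (a₁ * a₂⁻¹ * θ₂ + a₂⁻¹ * z) z) ↔
    (-z ≤ x * |Z₁| - y * Z₂ ∧ x * |Z₁| - y * Z₂ ≤ z) :=
  stmt8_general a₁ a₂ z x y θ₁ θ₂ Z₁ Z₂ ha₁ ha₂ ha hx hy hZ₁ hZ₂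
end

section
/- Let θ̂ ~ N(0, I₂), a₁, a₂ > 0 with a₁² + a₂² = 1, b = 0, z = z_{1−α/2}. With A = {θ ∈ ℝ² : max(a₁a₂⁻¹θ₂ − a₂⁻¹z, −z) ≤ θ₁ ≤ max(a₁a₂⁻¹θ₂ + a₂⁻¹z, z)}, one has P(θ̂ ∈ A) = 1 − α. -/
open MeasureTheory ProbabilityTheory

/-!
With `v = a₂ θ₁ - a₁ θ₂`, the region is `{|min θ₁ v| ≤ z}`. Both `θ₁` and `v` are standard normal
(`v` because `a₁² + a₂² = 1`), and `θ ↦ -θ` preserves the law while negating both, so the corners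
`{θ₁ < -z, v < -z}` and `{θ₁ > z, v > z}` carry the same mass. For `z ≥ 0`, which `α ≤ 1`
forces, inclusion–exclusion then gives `P(|min θ₁ v| ≤ z) = 1 - P(θ₁ < -z) - P(v < -z) = 1 - α/2 - α/2`.
-/

open Set NNReal

theorem measureReal_abs_min_le {Ω : Type*} {mΩ : MeasurableSpace Ω} {P : Measure Ω}
    [IsProbabilityMeasure P] {X Y : Ω → ℝ} (hX : Measurable X) (hY : Measurable Y)
    {σ : Ω → Ω} (hσ : MeasurePreserving σ P P) (hXσ : ∀ ω, X (σ ω) = -X ω)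
    (hYσ : ∀ ω, Y (σ ω) = -Y ω) {z : ℝ} (hz : 0 ≤ z) :
    P.real {ω | |min (X ω) (Y ω)| ≤ z} =
      1 - P.real {ω | X ω < -z} - P.real {ω | Y ω < -z} := by
  change _ = 1 - P.real (X ⁻¹' Iio (-z)) - P.real (Y ⁻¹' Iio (-z))
  have hLower : MeasurableSet (X ⁻¹' Iio (-z) ∪ Y ⁻¹' Iio (-z)) :=
    (hX measurableSet_Iio).union (hY measurableSet_Iio)
  have hUpper : MeasurableSet (X ⁻¹' Ioi z ∩ Y ⁻¹' Ioi z) :=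
    (hX measurableSet_Ioi).inter (hY measurableSet_Ioi)
  have hband : {ω | |min (X ω) (Y ω)| ≤ z} =
      ((X ⁻¹' Iio (-z) ∪ Y ⁻¹' Iio (-z)) ∪ (X ⁻¹' Ioi z ∩ Y ⁻¹' Ioi z))ᶜ := by
    ext ω
    simp only [mem_ofPred_eq, mem_compl_iff, mem_union, mem_inter_iff, mem_preimage, mem_Iio,
      mem_Ioi, abs_le, le_min_iff, min_le_iff]
    grind
  have hdisj : Disjoint (X ⁻¹' Iio (-z) ∪ Y ⁻¹' Iio (-z)) (X ⁻¹' Ioi z ∩ Y ⁻¹' Ioi z) := by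
    rw [disjoint_left]
    rintro ω (h | h) ⟨h₁, h₂⟩ <;> simp only [mem_preimage, mem_Iio, mem_Ioi] at * <;> linarith
  have hcorner :
      P.real (X ⁻¹' Iio (-z) ∩ Y ⁻¹' Iio (-z)) = P.real (X ⁻¹' Ioi z ∩ Y ⁻¹' Ioi z) := by
    rw [← hσ.measureReal_preimage hUpper.nullMeasurableSet]
    congr 1
    ext ω
    simp only [mem_inter_iff, mem_preimage, mem_Iio, mem_Ioi, hXσ, hYσ, lt_neg]
  have hincl_excl := measureReal_union_add_inter (s := X ⁻¹' Iio (-z))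
    (hY (measurableSet_Iio (a := -z))) (μ := P)
  rw [hband, probReal_compl_eq_one_sub (hLower.union hUpper), measureReal_union hdisj hUpper,
    ← hcorner]
  linarith

section Gaussian

variable {v : ℝ≥0}

variable (v) in
lemma measurePreserving_neg_gaussianReal :
    MeasurePreserving (fun x ↦ -x) (gaussianReal 0 v) (gaussianReal 0 v) :=
  ⟨measurable_neg, by simpa using gaussianReal_map_neg (μ := 0) (v := v)⟩

lemma gaussianReal_real_Iio_neg (t : ℝ) :
    (gaussianReal 0 v).real (Iio (-t)) = 1 - (gaussianReal 0 v).real (Iic t) :=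
  calc (gaussianReal 0 v).real (Iio (-t))
      = (gaussianReal 0 v).real ((fun x ↦ -x) ⁻¹' Iio (-t)) :=
        ((measurePreserving_neg_gaussianReal v).measureReal_preimage
          measurableSet_Iio.nullMeasurableSet).symm
    _ = (gaussianReal 0 v).real (Iic t)ᶜ := by congr 1; ext; simp
    _ = 1 - (gaussianReal 0 v).real (Iic t) := probReal_compl_eq_one_sub measurableSet_Iic

lemma gaussianReal_real_Iic_lt_half (hv : v ≠ 0) {t : ℝ} (ht : t < 0) :
    (gaussianReal 0 v).real (Iic t) < 1 / 2 := by
  have hpos : 0 < (gaussianReal 0 v).real (Ioo t (-t)) := by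
    have := (gaussianReal_absolutelyContinuous' 0 hv).isOpenPosMeasure
    exact ENNReal.toReal_pos ((Measure.measure_Ioo_pos _).mpr (by linarith)).ne'
      (measure_ne_top _ _)
  have hsplit : Iio (-t) = Iic t ∪ Ioo t (-t) := by
    ext x
    simp only [mem_Iio, mem_union, mem_Iic, mem_Ioo]
    grind
  have hsymm := gaussianReal_real_Iio_neg (v := v) t
  rw [hsplit, measureReal_union ((Iic_disjoint_Ioi le_rfl).mono_right Ioo_subset_Ioi_self)
    measurableSet_Ioo] at hsymm
  linarith

lemma gaussianReal_mul_sub_mul_of_indepFun {Ω : Type*} {mΩ : MeasurableSpace Ω}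
    {P : Measure Ω} {X Y : Ω → ℝ} (hXY : X ⟂ᵢ[P] Y) (hX : HasLaw X (gaussianReal 0 v) P)
    (hY : HasLaw Y (gaussianReal 0 v) P) {a b : ℝ} (hab : a ^ 2 + b ^ 2 = 1) :
    HasLaw (fun ω ↦ a * X ω - b * Y ω) (gaussianReal 0 v) P := by
  have hsum := gaussianReal_add_gaussianReal_of_indepFun
    (hXY.comp (measurable_const_mul a) (measurable_const_mul (-b)))
    (gaussianReal_const_mul hX a).map_eq (gaussianReal_const_mul hY (-b)).map_eq
  refine ⟨by fun_prop, ?_⟩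
  convert hsum using 2
  · ext ω
    simp [sub_eq_add_neg]
  · simp
  · ext
    simp only [even_two, Even.neg_pow, NNReal.coe_add, NNReal.coe_mul, coe_mk]
    linear_combination (-(v : ℝ)) * hab

end Gaussian

lemma max_le_and_le_max_iff_abs_min_le {a₁ a₂ z x y : ℝ} (ha₂ : 0 < a₂) :
    (max (a₁ * a₂⁻¹ * y - a₂⁻¹ * z) (-z) ≤ x ∧ x ≤ max (a₁ * a₂⁻¹ * y + a₂⁻¹ * z) z) ↔
      |min x (a₂ * x - a₁ * y)| ≤ z := by
  have hlow : a₁ * a₂⁻¹ * y - a₂⁻¹ * z ≤ x ↔ -z ≤ a₂ * x - a₁ * y := by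
    rw [← mul_le_mul_iff_right₀ ha₂]
    field_simp
    constructor <;> intro <;> linarith
  have hup : x ≤ a₁ * a₂⁻¹ * y + a₂⁻¹ * z ↔ a₂ * x - a₁ * y ≤ z := by
    rw [← mul_le_mul_iff_right₀ ha₂]
    field_simp
    constructor <;> intro <;> linarith
  simp only [abs_le, max_le_iff, le_max_iff, le_min_iff, min_le_iff, hlow, hup]
  tauto

theorem stmt9_general (a₁ a₂ α z : ℝ)
    (ha₂ : 0 < a₂) (ha : a₁ ^ 2 + a₂ ^ 2 = 1)
    (hα : α ∈ Set.Icc (0:ℝ) 1) (hz : stdNormalCDF z = 1 - α / 2) :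
    (((gaussianReal 0 1).prod (gaussianReal 0 1))
      {θ : ℝ × ℝ | max (a₁ * a₂⁻¹ * θ.2 - a₂⁻¹ * z) (-z) ≤ θ.1 ∧
        θ.1 ≤ max (a₁ * a₂⁻¹ * θ.2 + a₂⁻¹ * z) z}).toReal = 1 - α := by
  rw [stdNormalCDF, ← measureReal_def] at hz
  have hz₀ : 0 ≤ z := by
    by_contra! hneg
    linarith [gaussianReal_real_Iic_lt_half one_ne_zero hneg, hα.2]
  let γ := gaussianReal 0 1
  let v : ℝ × ℝ → ℝ := fun θ ↦ a₂ * θ.1 - a₁ * θ.2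
  have hfst : HasLaw (fun θ : ℝ × ℝ ↦ θ.1) γ (γ.prod γ) := ⟨by fun_prop, by simp⟩
  have hsnd : HasLaw (fun θ : ℝ × ℝ ↦ θ.2) γ (γ.prod γ) := ⟨by fun_prop, by simp⟩
  have hv : HasLaw v γ (γ.prod γ) :=
    gaussianReal_mul_sub_mul_of_indepFun (indepFun_prod measurable_id measurable_id) hfst hsnd
      (by linarith)
  have hneg := (measurePreserving_neg_gaussianReal 1).prod (measurePreserving_neg_gaussianReal 1)
  simp_rw [← measureReal_def, max_le_and_le_max_iff_abs_min_le ha₂]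
  rw [measureReal_abs_min_le measurable_fst (by fun_prop) hneg (fun _ ↦ rfl)
      (fun θ ↦ by simp only [Prod.map_fst, Prod.map_snd]; ring) hz₀,
    hfst.measureReal_eq measurableSet_Iio, hv.measureReal_eq measurableSet_Iio,
    Iio_def, gaussianReal_real_Iio_neg, hz]
  ring

/-- Exact coverage of the IICI acceptance region when the inequality binds (b = 0):
P(θ̂ ∈ A) = 1 − α for θ̂ ~ N(0, I₂). -/
theorem stmt9 (a₁ a₂ α z : ℝ)
    (ha₁ : 0 < a₁) (ha₂ : 0 < a₂) (ha : a₁ ^ 2 + a₂ ^ 2 = 1)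
    (hα : α ∈ Set.Icc (0:ℝ) 1) (hz : stdNormalCDF z = 1 - α / 2) :
    (((gaussianReal 0 1).prod (gaussianReal 0 1))
      {θ : ℝ × ℝ | max (a₁ * a₂⁻¹ * θ.2 - a₂⁻¹ * z) (-z) ≤ θ.1 ∧
        θ.1 ≤ max (a₁ * a₂⁻¹ * θ.2 + a₂⁻¹ * z) z}).toReal = 1 - α :=
  stmt9_general a₁ a₂ α z ha₂ ha hα hz
end

section
/- Let θ̂ ~ N(0, I₂), let a₂ ∈ (0,1), a₁ = √(1 − a₂²), z = z_{1−α/2}, c̈ = a₁⁻¹(1 − a₂)z, and define the IICI upper bound u(θ̂) = θ̂₁ + z if a₁θ̂₁ + a₂θ̂₂ ≤ −c̈ and u(θ̂) = a₂²θ̂₁ − a₁a₂θ̂₂ + a₂z otherwise, and lower bound ℓ(θ̂) = θ̂₁ − z if a₁θ̂₁ + a₂θ̂₂ ≤ c̈ and ℓ(θ̂) = a₂²θ̂₁ − a₁a₂θ̂₂ − a₂z otherwise. Then ℓ(θ̂) ≤ u(θ̂) always, and u(θ̂) − ℓ(θ̂) ≤ 2z, i.e., the IICI is a nonempty interval never longer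 than the usual confidence interval. -/
/-!
Write `g = a₁θ₁ + a₂θ₂`. Since `a₁² + a₂² = 1`, the centre of the equality-imposed interval is
`a₂²θ₁ − a₁a₂θ₂ = θ₁ − a₁g`, and the threshold satisfies `a₁c̈ = (1 − a₂)z`. Hence in the
interpolating regime `|g| ≤ c̈` the length `(1 + a₂)z − a₁g` lies between `2a₂z` and `2z`, while the
other two regimes have lengths `2z` and `2a₂z`.
-/

namespace IICI

/-- The lower endpoint `ℓ(θ̂)`, with `c` playing the role of `c̈`. -/
noncomputable def lower (a₁ a₂ z c θ₁ θ₂ : ℝ) : ℝ :=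
  if a₁ * θ₁ + a₂ * θ₂ ≤ c then θ₁ - z else a₂ ^ 2 * θ₁ - a₁ * a₂ * θ₂ - a₂ * z

noncomputable def upper (a₁ a₂ z c θ₁ θ₂ : ℝ) : ℝ :=
  if a₁ * θ₁ + a₂ * θ₂ ≤ -c then θ₁ + z else a₂ ^ 2 * θ₁ - a₁ * a₂ * θ₂ + a₂ * z

variable {a₁ a₂ z c : ℝ}

lemma restricted_center_eq (hsq : a₁ ^ 2 + a₂ ^ 2 = 1) (θ₁ θ₂ : ℝ) :
    a₂ ^ 2 * θ₁ - a₁ * a₂ * θ₂ = θ₁ - a₁ * (a₁ * θ₁ + a₂ * θ₂) := by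
  linear_combination θ₁ * hsq

lemma lower_le_upper_and_sub_le (hsq : a₁ ^ 2 + a₂ ^ 2 = 1) (ha₁ : 0 < a₁)
    (ha₂ : 0 ≤ a₂) (ha₂_le : a₂ ≤ 1) (hz : 0 ≤ z) (hc : a₁ * c = (1 - a₂) * z)
    (θ₁ θ₂ : ℝ) :
    lower a₁ a₂ z c θ₁ θ₂ ≤ upper a₁ a₂ z c θ₁ θ₂ ∧
      upper a₁ a₂ z c θ₁ θ₂ - lower a₁ a₂ z c θ₁ θ₂ ≤ 2 * z := by
  have hc_nonneg : 0 ≤ c := nonneg_of_mul_nonneg_right (hc ▸ by nlinarith) ha₁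
  have ha₂z : 0 ≤ a₂ * z := mul_nonneg ha₂ hz
  have ha₂z_le : a₂ * z ≤ z := mul_le_of_le_one_left hz ha₂_le
  unfold lower upper
  rw [restricted_center_eq hsq]
  set g := a₁ * θ₁ + a₂ * θ₂
  split_ifs with hg_le hg_le_neg hg_le_neg
  · constructor <;> linarith
  · have hag_le : a₁ * g ≤ a₁ * c := mul_le_mul_of_nonneg_left hg_le ha₁.le
    have hag_gt : a₁ * -c < a₁ * g := mul_lt_mul_of_pos_left (not_le.mp hg_le_neg) ha₁
    constructor <;> linarith
  · exact absurd (hg_le_neg.trans (by linarith)) hg_le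
  · constructor <;> linarith

end IICI

open IICI in
/-- The canonical IICI is a nonempty interval never longer than the usual confidence
interval: ℓ(θ̂) ≤ u(θ̂) and u(θ̂) − ℓ(θ̂) ≤ 2z, for every realization θ̂ ∈ ℝ². -/
theorem stmt17 (a₂ a₁ z c θ₁ θ₂ ℓ u : ℝ)
    (ha₂ : a₂ ∈ Set.Ioo (0:ℝ) 1)
    (ha₁ : a₁ = Real.sqrt (1 - a₂ ^ 2))
    (hz : 0 < z) (hc : c = a₁⁻¹ * (1 - a₂) * z)
    (hℓ : ℓ = if a₁ * θ₁ + a₂ * θ₂ ≤ c then θ₁ - z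
      else a₂ ^ 2 * θ₁ - a₁ * a₂ * θ₂ - a₂ * z)
    (hu : u = if a₁ * θ₁ + a₂ * θ₂ ≤ -c then θ₁ + z
      else a₂ ^ 2 * θ₁ - a₁ * a₂ * θ₂ + a₂ * z) :
    ℓ ≤ u ∧ u - ℓ ≤ 2 * z := by
  obtain ⟨ha₂_pos, ha₂_lt⟩ := ha₂
  have hpos : 0 < 1 - a₂ ^ 2 := by nlinarith
  have ha₁_pos : 0 < a₁ := ha₁ ▸ Real.sqrt_pos.mpr hpos
  have hsq : a₁ ^ 2 + a₂ ^ 2 = 1 := by rw [ha₁, Real.sq_sqrt hpos.le]; ring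
  have hac : a₁ * c = (1 - a₂) * z := by rw [hc]; field_simp
  subst hℓ hu
  exact lower_le_upper_and_sub_le hsq ha₁_pos ha₂_pos.le ha₂_lt.le hz.le hac θ₁ θ₂
end
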